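/- arXiv:1105.2202 — 7 statements merged into one kernel-verified Lean document; each statement's English description precedes it below -/
import Mathlib

section
/- For every graph G on n vertices and every graph H, the corona satisfies I(G ∘ H; x) = (I(H;x))^n · I(G; x / I(H;x)), interpreted as a polynomial identity. -/
open Polynomial

open scoped Classical in
/-- The independence polynomial of a finite simple graph. -/
noncomputable def indepPoly {V : Type*} [Fintype V] (G : SimpleGraph V) : Polynomial ℤ :=
  ∑ s : Finset V, if (s : Set V).Pairwise (fun u v => ¬ G.Adj u v) then X ^ s.card else 0

/-- Corona of two graphs. -/
def corona {V W : Type*} (G : SimpleGraph V) (H : SimpleGraph W) : SimpleGraph (V ⊕ V × W) where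
  Adj x y :=
    match x, y with
    | .inl u, .inl v => G.Adj u v
    | .inl u, .inr (v, _) => u = v
    | .inr (v, _), .inl u => u = v
    | .inr (u, a), .inr (v, b) => u = v ∧ H.Adj a b
  symm := by
    constructor
    rintro (u | ⟨u, a⟩) (v | ⟨v, b⟩) h
    · exact G.adj_symm h
    · exact h
    · exact h
    · exact ⟨h.1.symm, h.2.symm⟩
  loopless := by
    constructor
    rintro (u | ⟨u, a⟩) h
    · exact G.irrefl h
    · exact H.irrefl h.2

/-!
An independent set of `G ∘ H` is a pair `(A, R)` with `A ⊆ V` independent in `G` and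
`R ⊆ V × W` whose slice over each `v` is an independent set of `H`, empty when `v ∈ A`.
The slices are chosen independently, so for fixed `A` they contribute `I(H)^(n - |A|)`, and
grouping the sets `A` by size turns `Σ_A x^|A| I(H)^(n - |A|)` into the right-hand side.
-/

open Finset

section

open scoped Classical

namespace Finset

variable {α β : Type*} [Fintype α] [Fintype β]

noncomputable def curryEquiv : Finset (α × β) ≃ (α → Finset β) where
  toFun R a := {b | (a, b) ∈ R}
  invFun f := {p | p.2 ∈ f p.1}
  left_inv R := by ext; simp
  right_inv f := by ext; simp

theorem card_eq_sum_card_curryEquiv (R : Finset (α × β)) : #R = ∑ a, #(curryEquiv R a) := by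
  simp only [curryEquiv, Equiv.coe_fn_mk, card_filter]
  rw [← Fintype.sum_prod_type' (fun a b => if (a, b) ∈ R then 1 else 0), sum_boole]
  simp

theorem sum_prod_curryEquiv {M : Type*} [CommSemiring M] (f : α → Finset β → M) :
    ∑ R : Finset (α × β), ∏ a, f a (curryEquiv R a) = ∏ a, ∑ t, f a t := by
  rw [Fintype.prod_sum]
  exact Fintype.sum_equiv curryEquiv _ _ fun _ => rfl

end Finset

variable {V W : Type*} [Fintype V] [Fintype W]

theorem sum_ite_isIndepSet_eq_sum_coeff_smul {M : Type*} [AddCommGroup M]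
    (G : SimpleGraph V) (f : ℕ → M) :
    ∑ s : Finset V, (if G.IsIndepSet ↑s then f #s else 0) =
      ∑ k ∈ range (Fintype.card V + 1), (indepPoly G).coeff k • f k := by
  simp only [indepPoly, finsetSum_coeff, sum_smul]
  rw [sum_comm]
  refine sum_congr rfl fun s _ => ?_
  split_ifs
  · simp [coeff_X_pow, ite_smul, Nat.lt_succ_of_le (card_le_univ s)]
  · simp

variable (G : SimpleGraph V) (H : SimpleGraph W)

theorem corona_isIndepSet_disjSum_iff (A : Finset V) (R : Finset (V × W)) :
    (corona G H).IsIndepSet ↑(A.disjSum R) ↔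
      G.IsIndepSet ↑A ∧
        ∀ v, (v ∈ A → curryEquiv R v = ∅) ∧ H.IsIndepSet ↑(curryEquiv R v) := by
  simp only [SimpleGraph.IsIndepSet, Set.Pairwise, Sum.forall, mem_coe, inl_mem_disjSum,
    inr_mem_disjSum, Prod.forall, corona, curryEquiv, Equiv.coe_fn_mk, ne_eq, Sum.inl.injEq,
    Sum.inr.injEq, Prod.mk.injEq, reduceCtorEq, not_false_eq_true, forall_const, not_and,
    forall_mem_not_eq', eq_empty_iff_forall_notMem, mem_filter, mem_univ, true_and]
  grind

noncomputable def coronaSliceWeight (A : Finset V) (v : V) (t : Finset W) : ℤ[X] :=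
  if (v ∈ A → t = ∅) ∧ H.IsIndepSet ↑t then X ^ #t else 0

theorem ite_isIndepSet_corona_disjSum (A : Finset V) (R : Finset (V × W)) :
    (if (corona G H).IsIndepSet ↑(A.disjSum R) then X ^ #(A.disjSum R) else 0 : ℤ[X]) =
      (if G.IsIndepSet ↑A then X ^ #A else 0) *
        ∏ v, coronaSliceWeight H A v (curryEquiv R v) := by
  simp only [coronaSliceWeight, prod_ite_zero, ite_zero_mul_ite_zero, ← prod_pow_eq_pow_sum,
    corona_isIndepSet_disjSum_iff, card_disjSum, card_eq_sum_card_curryEquiv R, pow_add,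
    mem_univ, forall_const]

omit [Fintype V] in
theorem sum_coronaSliceWeight (A : Finset V) (v : V) :
    ∑ t, coronaSliceWeight H A v t = if v ∈ A then 1 else indepPoly H := by
  by_cases hv : v ∈ A
  · simp [coronaSliceWeight, hv, ite_and]
  · simp [coronaSliceWeight, hv, indepPoly]

theorem indepPoly_corona_eq_sum :
    indepPoly (corona G H) = ∑ A : Finset V,
      (if G.IsIndepSet ↑A then X ^ #A else 0) * indepPoly H ^ (Fintype.card V - #A) := by
  calc indepPoly (corona G H)
      = ∑ A : Finset V, ∑ R : Finset (V × W),
          (if (corona G H).IsIndepSet ↑(A.disjSum R) then X ^ #(A.disjSum R) else 0) := by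
        rw [indepPoly, ← Fintype.sum_prod_type',
          ← (sumEquiv (α := V) (β := V × W)).symm.toEquiv.sum_comp]
        simp
    _ = ∑ A : Finset V, (if G.IsIndepSet ↑A then X ^ #A else 0) *
          ∏ v, ∑ t, coronaSliceWeight H A v t := by
        simp only [ite_isIndepSet_corona_disjSum, ← mul_sum, sum_prod_curryEquiv]
    _ = _ := by
        simp [sum_coronaSliceWeight, prod_ite, filter_not, card_univ_sdiff]

end

theorem corona_indepPoly {V W : Type*} [Fintype V] [Fintype W]
    (G : SimpleGraph V) (H : SimpleGraph W) :
    indepPoly (corona G H) =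
      ∑ k ∈ Finset.range (Fintype.card V + 1),
        C ((indepPoly G).coeff k) * X ^ k * indepPoly H ^ (Fintype.card V - k) := by
  rw [indepPoly_corona_eq_sum]
  simp only [ite_zero_mul, C_mul', smul_mul_assoc]
  exact sum_ite_isIndepSet_eq_sum_coeff_smul G fun k => X ^ k * indepPoly H ^ (Fintype.card V - k)
end

section
/- If S is an independent set of a graph G such that |N(A) ∩ S| = 2|A| holds for every independent set A ⊆ V(G) \ S, then the independence polynomial I(G;x) is symmetric. -/
/-!
Write `N(A)` for the neighbours of `A` inside `S`. An independent set `I` splits as `A ∪ B` with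
`A = I \ S` and `B = I ∩ S ⊆ S \ N(A)`. The map `A ∪ B ↦ A ∪ (S \ N(A) \ B)` is an involution on
independent sets, and since `|N(A)| = 2|A|` it sends sets of size `k` to sets of size `|S| - k`.
Hence `s_k = s_{|S| - k}`, and `α(G) = |S|` because `S` is itself independent.
-/

open Polynomial

/-- A polynomial is palindromic (symmetric). -/
def IsPalindromic (p : Polynomial ℤ) : Prop :=
  ∀ j ≤ p.natDegree, p.coeff j = p.coeff (p.natDegree - j)

open Finset

theorem isPalindromic_of_coeff_symm {p : ℤ[X]} {n : ℕ} (hdeg : p.natDegree ≤ n)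
    (hn : p.coeff n ≠ 0) (hsymm : ∀ j ≤ n, p.coeff j = p.coeff (n - j)) : IsPalindromic p := by
  rwa [IsPalindromic, natDegree_eq_of_le_of_coeff_ne_zero hdeg hn]

section

open scoped Classical

variable {V : Type*}

theorem coeff_indepPoly [Fintype V] (G : SimpleGraph V) (j : ℕ) :
    (indepPoly G).coeff j = #(G.indepSetFinset j) := by
  simp only [indepPoly, finsetSum_coeff, apply_ite (coeff · j), coeff_X_pow, coeff_zero,
    SimpleGraph.indepSetFinset, card_filter, SimpleGraph.isNIndepSet_iff, Nat.cast_sum]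
  refine sum_congr rfl fun s _ => ?_
  split_ifs <;> simp_all [eq_comm]

theorem natDegree_indepPoly_le [Fintype V] (G : SimpleGraph V) {n : ℕ}
    (h : ∀ I : Finset V, G.IsIndepSet I → #I ≤ n) : (indepPoly G).natDegree ≤ n := by
  refine natDegree_le_iff_coeff_eq_zero.2 fun j hj => ?_
  rw [coeff_indepPoly, Nat.cast_eq_zero, card_eq_zero, eq_empty_iff_forall_notMem]
  intro I hI
  have := h I (SimpleGraph.mem_indepSetFinset_iff.1 hI).isIndepSet
  have := (SimpleGraph.mem_indepSetFinset_iff.1 hI).card_eq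
  omega

theorem coeff_indepPoly_card_ne_zero [Fintype V] {G : SimpleGraph V} {S : Finset V}
    (hS : G.IsIndepSet S) : (indepPoly G).coeff #S ≠ 0 := by
  rw [coeff_indepPoly, Nat.cast_ne_zero]
  exact card_ne_zero_of_mem (SimpleGraph.mem_indepSetFinset_iff.2 ⟨hS, rfl⟩)

namespace SimpleGraph

variable (G : SimpleGraph V) (S : Finset V)

noncomputable def neighborsIn (A : Finset V) : Finset V :=
  S.filter fun s => ∃ a ∈ A, G.Adj a s

noncomputable def indepDual (I : Finset V) : Finset V :=
  (I \ S) ∪ ((S \ G.neighborsIn S (I \ S)) \ I)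

variable {G S} {I : Finset V}

theorem neighborsIn_subset (A : Finset V) : G.neighborsIn S A ⊆ S :=
  filter_subset _ _

theorem IsIndepSet.inter_subset_sdiff_neighborsIn (hI : G.IsIndepSet I) :
    I ∩ S ⊆ S \ G.neighborsIn S (I \ S) := by
  intro v hv
  obtain ⟨hvI, hvS⟩ := mem_inter.1 hv
  refine mem_sdiff.2 ⟨hvS, fun hvN => ?_⟩
  obtain ⟨-, a, ha, hav⟩ := mem_filter.1 hvN
  obtain ⟨haI, haS⟩ := mem_sdiff.1 ha
  exact hI haI hvI (ne_of_mem_of_not_mem hvS haS).symm hav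

theorem IsIndepSet.sdiff_neighborsIn_inter (hI : G.IsIndepSet I) :
    (S \ G.neighborsIn S (I \ S)) ∩ I = I ∩ S := by
  refine Subset.antisymm (fun x hx => ?_) fun x hx => ?_
  · exact mem_inter.2 ⟨(mem_inter.1 hx).2, (mem_sdiff.1 (mem_inter.1 hx).1).1⟩
  · exact mem_inter.2 ⟨hI.inter_subset_sdiff_neighborsIn hx, (mem_inter.1 hx).1⟩

theorem card_indepDual_add_card (hI : G.IsIndepSet I)
    (hN : #(G.neighborsIn S (I \ S)) = 2 * #(I \ S)) : #(G.indepDual S I) + #I = #S := by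
  have hdisj : Disjoint (I \ S) ((S \ G.neighborsIn S (I \ S)) \ I) :=
    Finset.disjoint_left.2 fun x hx hx' => (mem_sdiff.1 hx).2 (mem_sdiff.1 (mem_sdiff.1 hx').1).1
  have hS_split := card_sdiff_add_card_eq_card (neighborsIn_subset (G := G) (S := S) (I \ S))
  have hI_split := card_sdiff_add_card_inter I S
  have hT_split := card_sdiff_add_card_inter (S \ G.neighborsIn S (I \ S)) I
  rw [hI.sdiff_neighborsIn_inter] at hT_split
  rw [indepDual, card_union_eq_card_add_card.2 hdisj]
  omega

theorem isIndepSet_indepDual (hS : G.IsIndepSet S) (hI : G.IsIndepSet I) :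
    G.IsIndepSet (G.indepDual S I) := by
  have hcross : ∀ a ∈ I \ S, ∀ b ∈ (S \ G.neighborsIn S (I \ S)) \ I, ¬G.Adj a b :=
    fun a ha b hb hab => (mem_sdiff.1 (mem_sdiff.1 hb).1).2
      (mem_filter.2 ⟨(mem_sdiff.1 (mem_sdiff.1 hb).1).1, a, ha, hab⟩)
  rw [indepDual, coe_union, IsIndepSet, Set.pairwise_union]
  refine ⟨hI.mono (coe_subset.2 sdiff_subset),
    hS.mono (coe_subset.2 (sdiff_subset.trans sdiff_subset)),
    fun a ha b hb _ => ⟨hcross a ha b hb, fun hba => hcross a ha b hb hba.symm⟩⟩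

theorem indepDual_indepDual (hI : G.IsIndepSet I) : G.indepDual S (G.indepDual S I) = I := by
  have hA : G.indepDual S I \ S = I \ S := by
    ext x
    simp only [indepDual, mem_sdiff, mem_union]
    tauto
  rw [indepDual, hA]
  ext x
  have hx := Finset.ext_iff.1 (hI.sdiff_neighborsIn_inter (S := S)) x
  simp only [indepDual, mem_union, mem_sdiff, mem_inter] at hx ⊢
  tauto

theorem indepDual_mem_indepSetFinset [Fintype V] (hS : G.IsIndepSet S) {k : ℕ}
    (hI : I ∈ G.indepSetFinset k) (hN : #(G.neighborsIn S (I \ S)) = 2 * #(I \ S)) :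
    G.indepDual S I ∈ G.indepSetFinset (#S - k) := by
  obtain ⟨hIndep, rfl⟩ := mem_indepSetFinset_iff.1 hI
  have := card_indepDual_add_card hIndep hN
  exact mem_indepSetFinset_iff.2 ⟨isIndepSet_indepDual hS hIndep, by omega⟩

theorem card_indepSetFinset_eq_card_indepSetFinset_sub [Fintype V] (hS : G.IsIndepSet S)
    (hN : ∀ I : Finset V, G.IsIndepSet I → #(G.neighborsIn S (I \ S)) = 2 * #(I \ S))
    {j : ℕ} (hj : j ≤ #S) : #(G.indepSetFinset j) = #(G.indepSetFinset (#S - j)) := by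
  have hdual : ∀ {k} {I : Finset V}, I ∈ G.indepSetFinset k →
      G.indepDual S I ∈ G.indepSetFinset (#S - k) := fun hI =>
    indepDual_mem_indepSetFinset hS hI (hN _ (mem_indepSetFinset_iff.1 hI).isIndepSet)
  refine card_bij' (fun I _ => G.indepDual S I) (fun I _ => G.indepDual S I)
    (fun I hI => hdual hI) (fun I hI => Nat.sub_sub_self hj ▸ hdual hI)
    (fun I hI => indepDual_indepDual (mem_indepSetFinset_iff.1 hI).isIndepSet)
    (fun I hI => indepDual_indepDual (mem_indepSetFinset_iff.1 hI).isIndepSet)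

end SimpleGraph

end

open scoped Classical in
theorem stevanovic_symmetry {V : Type*} [Fintype V] (G : SimpleGraph V) (S : Finset V)
    (hS : (S : Set V).Pairwise fun u v => ¬ G.Adj u v)
    (h : ∀ A : Finset V, (A : Set V).Pairwise (fun u v => ¬ G.Adj u v) →
      (∀ a ∈ A, a ∉ S) →
      (S.filter fun s => ∃ a ∈ A, G.Adj a s).card = 2 * A.card) :
    IsPalindromic (indepPoly G) := by
  have hN : ∀ I : Finset V, G.IsIndepSet I → #(G.neighborsIn S (I \ S)) = 2 * #(I \ S) :=
    fun I hI => h _ (hI.mono (coe_subset.2 sdiff_subset)) fun _ ha => (mem_sdiff.1 ha).2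
  have hle : ∀ I : Finset V, G.IsIndepSet I → #I ≤ #S := fun I hI => by
    have := SimpleGraph.card_indepDual_add_card hI (hN I hI)
    omega
  refine isPalindromic_of_coeff_symm (natDegree_indepPoly_le G hle)
    (coeff_indepPoly_card_ne_zero hS) fun j hj => ?_
  rw [coeff_indepPoly, coeff_indepPoly,
    SimpleGraph.card_indepSetFinset_eq_card_indepSetFinset_sub hS hN hj]
end

section
/- If A is a clique in a graph G, then for every graph H, I((G,A) ∘ H; x) = I(H;x)^{|A|−1} · I((G,A) + H; x). -/
open Polynomial

/-- Partial corona `(G,A) ∘ H`: each vertex of `A` gets its own copy of `H`. -/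
def partialCorona {V W : Type*} (G : SimpleGraph V) (A : Finset V) (H : SimpleGraph W) :
    SimpleGraph (V ⊕ A × W) where
  Adj x y :=
    match x, y with
    | .inl u, .inl v => G.Adj u v
    | .inl u, .inr (a, _) => u = ↑a
    | .inr (a, _), .inl u => u = ↑a
    | .inr (a, w), .inr (b, w') => a = b ∧ H.Adj w w'
  symm := by
    constructor
    rintro (u | ⟨a, w⟩) (v | ⟨b, w'⟩) h
    · exact G.adj_symm h
    · exact h
    · exact h
    · exact ⟨h.1.symm, h.2.symm⟩
  loopless := by
    constructor
    rintro (u | ⟨a, w⟩) h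
    · exact G.irrefl h
    · exact H.irrefl h.2

/-- Partial Zykov sum `(G,A) + H`: every vertex of `A` is joined to every vertex of `H`. -/
def partialZykovSum {V W : Type*} (G : SimpleGraph V) (A : Finset V) (H : SimpleGraph W) :
    SimpleGraph (V ⊕ W) where
  Adj x y :=
    match x, y with
    | .inl u, .inl v => G.Adj u v
    | .inl u, .inr _ => u ∈ A
    | .inr _, .inl u => u ∈ A
    | .inr a, .inr b => H.Adj a b
  symm := by
    constructor
    rintro (u | a) (v | b) h
    · exact G.adj_symm h
    · exact h
    · exact h
    · exact H.adj_symm h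
  loopless := by
    constructor
    rintro (u | a) h
    · exact G.irrefl h
    · exact H.irrefl h


/-!
Split an independent set of either graph into its trace `s` on `G` and the rest. In the
corona the copies of `H` hanging at the vertices of `A \ s` may be filled independently, so the
part over `s` contributes `I(H)^|A \ s|`; in the Zykov sum the single copy of `H` contributes
`I(H)` if `s` misses `A` and `1` otherwise. An independent set meets the clique `A` in at most
one vertex, so in both cases `I(H)^|A \ s| = I(H)^(|A|-1) ⋅ (the Zykov factor)`.
-/

open Finset SimpleGraph

section FinsetProd

variable {α β : Type*} [Fintype α] [Fintype β] [DecidableEq α] [DecidableEq β]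

def finsetProdEquivPi : Finset (α × β) ≃ (α → Finset β) where
  toFun t a := {b | (a, b) ∈ t}
  invFun f := {p | p.2 ∈ f p.1}
  left_inv t := by ext; simp
  right_inv f := by ext; simp

@[simp]
lemma mem_finsetProdEquivPi_symm {f : α → Finset β} {p : α × β} :
    p ∈ finsetProdEquivPi.symm f ↔ p.2 ∈ f p.1 := by
  simp [finsetProdEquivPi]

lemma card_finsetProdEquivPi_symm (f : α → Finset β) :
    #(finsetProdEquivPi.symm f) = ∑ a, #(f a) := by
  simp only [finsetProdEquivPi, Equiv.coe_fn_symm_mk, card_filter, Fintype.sum_prod_type]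
  simp

end FinsetProd

section IndepPoly

open scoped Classical

variable {α β : Type*}

lemma isIndepSet_disjSum_iff {K : SimpleGraph (α ⊕ β)} {s : Finset α} {t : Finset β} :
    K.IsIndepSet (s.disjSum t : Set (α ⊕ β)) ↔ (K.comap Sum.inl).IsIndepSet s ∧
      (K.comap Sum.inr).IsIndepSet t ∧ ∀ a ∈ s, ∀ b ∈ t, ¬ K.Adj (.inl a) (.inr b) := by
  have hcoe : (s.disjSum t : Set (α ⊕ β)) = .inl '' s ∪ .inr '' t := by
    ext (a | b) <;> simp
  have : Std.Symm fun u v => ¬ K.Adj u v := ⟨fun _ _ h h' => h h'.symm⟩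
  rw [hcoe, IsIndepSet, Set.pairwise_union_of_symm, Sum.inl_injective.injOn.pairwise_image,
    Sum.inr_injective.injOn.pairwise_image]
  simp [IsIndepSet]

variable [Fintype α] [Fintype β]

lemma indepPoly_eq_sum (G : SimpleGraph α) [DecidablePred fun s : Finset α => G.IsIndepSet s] :
    indepPoly G = ∑ s : Finset α, if G.IsIndepSet s then X ^ #s else 0 := by
  unfold indepPoly
  congr!

lemma indepPoly_sum_type (K : SimpleGraph (α ⊕ β)) :
    indepPoly K = ∑ s : Finset α, (if (K.comap .inl).IsIndepSet s then X ^ #s else 0) *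
      ∑ t : Finset β, if (K.comap .inr).IsIndepSet t ∧
        ∀ a ∈ s, ∀ b ∈ t, ¬ K.Adj (.inl a) (.inr b) then X ^ #t else 0 := by
  rw [indepPoly_eq_sum, ← sumEquiv.symm.toEquiv.sum_comp,
    Fintype.sum_prod_type]
  refine sum_congr rfl fun s _ => ?_
  rw [mul_sum]
  refine sum_congr rfl fun t _ => ?_
  simp only [OrderIso.coe_toEquiv, sumEquiv_symm_apply, isIndepSet_disjSum_iff, card_disjSum,
    pow_add, ite_zero_mul_ite_zero]

end IndepPoly

section Graphs

open scoped Classical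

variable {V W : Type*} [Fintype W] (G : SimpleGraph V) (A : Finset V) (H : SimpleGraph W)

lemma sum_isIndepSet_and_imp_eq_empty (P : Prop) :
    ∑ t : Finset W, (if H.IsIndepSet t ∧ (P → t = ∅) then X ^ #t else 0) =
      if P then 1 else indepPoly H := by
  by_cases hP : P
  · rw [if_pos hP, Fintype.sum_eq_single ∅ fun t ht => if_neg fun h => ht (h.2 hP)]
    simp
  · simp [hP, indepPoly_eq_sum]

lemma isIndepSet_comap_inr_partialCorona_iff (f : A → Finset W) :
    ((partialCorona G A H).comap .inr).IsIndepSet (finsetProdEquivPi.symm f : Set (A × W)) ↔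
      ∀ a, H.IsIndepSet (f a) := by
  constructor
  · intro h a x hx y hy hxy hadj
    exact h (show (a, x) ∈ _ by simpa using hx) (show (a, y) ∈ _ by simpa using hy)
      (by simpa using hxy) ⟨rfl, hadj⟩
  · rintro h ⟨a, x⟩ hx ⟨b, y⟩ hy hne ⟨rfl, hadj⟩
    simp only [mem_coe, mem_finsetProdEquivPi_symm] at hx hy
    exact h a hx hy (by rintro rfl; exact hne rfl) hadj

lemma forall_not_adj_inl_inr_partialCorona_iff (s : Finset V) (f : A → Finset W) :
    (∀ u ∈ s, ∀ p ∈ finsetProdEquivPi.symm f, ¬ (partialCorona G A H).Adj (.inl u) (.inr p)) ↔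
      ∀ a : A, ↑a ∈ s → f a = ∅ := by
  simp only [eq_empty_iff_forall_notMem]
  exact ⟨fun h a has x hx => h a has (a, x) (by simpa using hx) rfl,
    fun h u hu p hp hup => h p.1 (hup ▸ hu) p.2 (by simpa using hp)⟩

lemma sum_partialCorona_right (s : Finset V) :
    ∑ t : Finset (A × W), (if ((partialCorona G A H).comap .inr).IsIndepSet t ∧
        ∀ u ∈ s, ∀ p ∈ t, ¬ (partialCorona G A H).Adj (.inl u) (.inr p) then X ^ #t else 0) =
      ∏ a : A, if ↑a ∈ s then 1 else indepPoly H := by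
  calc _ = ∑ f : A → Finset W, ∏ a,
          (if H.IsIndepSet (f a) ∧ (↑a ∈ s → f a = ∅) then X ^ #(f a) else 0) := by
        rw [← finsetProdEquivPi.symm.sum_comp]
        refine sum_congr rfl fun f _ => ?_
        rw [Fintype.prod_ite_zero, prod_pow_eq_pow_sum, card_finsetProdEquivPi_symm]
        simp only [isIndepSet_comap_inr_partialCorona_iff,
          forall_not_adj_inl_inr_partialCorona_iff, ← forall_and]
    _ = ∏ a : A, ∑ t : Finset W,
          (if H.IsIndepSet t ∧ (↑a ∈ s → t = ∅) then X ^ #t else 0) := by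
        rw [prod_univ_sum, Fintype.piFinset_univ]
    _ = ∏ a : A, if ↑a ∈ s then 1 else indepPoly H :=
      Fintype.prod_congr _ _ fun a => by convert sum_isIndepSet_and_imp_eq_empty H (↑a ∈ s)

lemma sum_partialZykovSum_right (s : Finset V) :
    ∑ t : Finset W, (if ((partialZykovSum G A H).comap .inr).IsIndepSet t ∧
        ∀ u ∈ s, ∀ w ∈ t, ¬ (partialZykovSum G A H).Adj (.inl u) (.inr w) then X ^ #t else 0) =
      if (A ∩ s).Nonempty then 1 else indepPoly H := by
  have hcross (t : Finset W) : (∀ u ∈ s, ∀ w ∈ t, ¬ (partialZykovSum G A H).Adj (.inl u) (.inr w))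
      ↔ ((A ∩ s).Nonempty → t = ∅) := by
    simp only [eq_empty_iff_forall_notMem, Finset.Nonempty, mem_inter]
    exact ⟨fun h ⟨u, huA, hus⟩ w hw => h u hus w hw huA,
      fun h u hus w hw huA => h ⟨u, huA, hus⟩ w hw⟩
  have hcomap : (partialZykovSum G A H).comap .inr = H := rfl
  simp only [hcross, hcomap]
  convert sum_isIndepSet_and_imp_eq_empty H _

variable [Fintype V]

lemma indepPoly_partialCorona :
    indepPoly (partialCorona G A H) = ∑ s : Finset V,
      (if G.IsIndepSet s then X ^ #s else 0) * ∏ a : A, if ↑a ∈ s then 1 else indepPoly H := by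
  rw [indepPoly_sum_type]
  refine sum_congr rfl fun s _ => ?_
  rw [← sum_partialCorona_right]
  -- the two sides differ only in `Decidable` instances and in `comap .inl (partialCorona G A H)`,
  -- which is `G` up to unfolding
  congr!

lemma indepPoly_partialZykovSum :
    indepPoly (partialZykovSum G A H) = ∑ s : Finset V,
      (if G.IsIndepSet s then X ^ #s else 0) * if (A ∩ s).Nonempty then 1 else indepPoly H := by
  rw [indepPoly_sum_type]
  refine sum_congr rfl fun s _ => ?_
  rw [← sum_partialZykovSum_right]
  congr!

end Graphs

section Clique

variable {V : Type*} [DecidableEq V]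

lemma prod_ite_mem_eq_pow_card_sdiff {M : Type*} [CommMonoid M] (A s : Finset V) (p : M) :
    ∏ a : A, (if ↑a ∈ s then 1 else p) = p ^ #(A \ s) := by
  rw [prod_coe_sort A fun a => if a ∈ s then 1 else p, prod_ite, prod_const_one, one_mul,
    prod_const, filter_notMem_eq_sdiff]

lemma card_inter_le_one_of_isClique_of_isIndepSet {G : SimpleGraph V} {A s : Finset V}
    (hA : G.IsClique (A : Set V)) (hs : G.IsIndepSet (s : Set V)) : #(A ∩ s) ≤ 1 := by
  refine card_le_one.2 fun a ha b hb => by_contra fun hab => ?_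
  rw [mem_inter] at ha hb
  exact hs hb.2 ha.2 (Ne.symm hab) (hA ha.1 hb.1 hab).symm

lemma pow_card_sdiff_eq_of_card_inter_le_one {M : Type*} [Monoid M] {A s : Finset V}
    (hA : A.Nonempty) (h : #(A ∩ s) ≤ 1) (p : M) :
    p ^ #(A \ s) = p ^ (#A - 1) * if (A ∩ s).Nonempty then 1 else p := by
  have hcard := card_sdiff_add_card_inter A s
  split_ifs with hAs
  · rw [mul_one]
    have hpos := hAs.card_pos
    congr 1
    omega
  · rw [not_nonempty_iff_eq_empty.1 hAs, card_empty, add_zero] at hcard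
    rw [hcard, pow_sub_one_mul hA.card_pos.ne']

end Clique

theorem partialCorona_indepPoly {V W : Type*} [Fintype V] [Fintype W]
    (G : SimpleGraph V) (A : Finset V) (H : SimpleGraph W)
    (hA : A.Nonempty) (hclique : G.IsClique (A : Set V)) :
    indepPoly (partialCorona G A H) =
      indepPoly H ^ (A.card - 1) * indepPoly (partialZykovSum G A H) := by
  classical
  rw [indepPoly_partialCorona, indepPoly_partialZykovSum, mul_sum]
  refine sum_congr rfl fun s _ => ?_
  by_cases hs : G.IsIndepSet s
  · rw [prod_ite_mem_eq_pow_card_sdiff, pow_card_sdiff_eq_of_card_inter_le_one hA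
      (card_inter_le_one_of_isClique_of_isIndepSet hclique hs), mul_left_comm]
  · simp [hs]
end

section
/- Let G be a graph on n vertices and Φ = {A₁, ..., A_q} a clique cover of G (a partition of V(G) into cliques). Then I(G ∘ 2K₁; x) = (1+x)^{2n − 2|Φ|} · I(Φ(G); x), where Φ(G) is obtained from G by adding, for each clique Q ∈ Φ, two new nonadjacent vertices joined to all vertices of Q. -/
open Polynomial

/-- The graph `Φ(G)` obtained from a clique cover `Φ` by adding, for each clique,
two new nonadjacent vertices joined to all vertices of the clique. -/
def cliqueExtend {V : Type*} [Fintype V] [DecidableEq V] (G : SimpleGraph V)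
    (Φ : Finpartition (Finset.univ : Finset V)) :
    SimpleGraph (V ⊕ Φ.parts × Fin 2) where
  Adj x y :=
    match x, y with
    | .inl u, .inl v => G.Adj u v
    | .inl u, .inr (P, _) => u ∈ (P : Finset V)
    | .inr (P, _), .inl u => u ∈ (P : Finset V)
    | .inr _, .inr _ => False
  symm := by
    constructor
    rintro (u | ⟨P, i⟩) (v | ⟨Q, j⟩) h
    · exact G.adj_symm h
    · exact h
    · exact h
    · exact h.elim
  loopless := by
    constructor
    rintro (u | ⟨P, i⟩) h
    · exact G.irrefl h
    · exact h

/-! Both graphs are `G` plus an independent set of new vertices, each joined to a set of old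
vertices. Grouping independent sets by their trace `A` on `V(G)`, the trace contributes
`x ^ |A| * (1 + x) ^ m`, where `m` counts the new vertices with no neighbour in `A`. In
`G ∘ 2K₁` this is `m = 2 (n - |A|)`; in `Φ(G)` it is `m = 2 (|Φ| - |A|)`, since an independent
set meets each clique of `Φ` at most once, hence meets exactly `|A|` of them. -/

open Finset SimpleGraph Sum
open scoped Classical

theorem sum_powerset_X_pow {ι : Type*} (s : Finset ι) :
    ∑ t ∈ s.powerset, (X : ℤ[X]) ^ #t = (1 + X) ^ #s := by
  simp [← prod_const, prod_one_add]

section IndependentExtension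

variable {V W : Type*} {H : SimpleGraph (V ⊕ W)}

theorem isIndepSet_disjSum_iff_s11 (hW : ∀ w w', ¬ H.Adj (inr w) (inr w')) (A : Finset V)
    (B : Finset W) :
    H.IsIndepSet (A.disjSum B : Set (V ⊕ W)) ↔
      (H.comap inl).IsIndepSet A ∧ ∀ a ∈ A, ∀ b ∈ B, ¬ H.Adj (inl a) (inr b) := by
  have hcoe : ((A.disjSum B : Finset (V ⊕ W)) : Set (V ⊕ W)) = inl '' A ∪ inr '' B := by
    ext (v | w) <;> simp
  rw [hcoe, isIndepSet_iff, Set.pairwise_union, inl_injective.injOn.pairwise_image,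
    inr_injective.injOn.pairwise_image]
  simp [Set.Pairwise, Function.onFun, hW, H.adj_comm (inr _)]

variable [Fintype V] [Fintype W] [DecidableEq V]

theorem indepPoly_eq_sum_of_forall_not_adj_inr {G : SimpleGraph V} (hG : H.comap inl = G)
    (hW : ∀ w w', ¬ H.Adj (inr w) (inr w')) :
    indepPoly H = ∑ A : Finset V, if G.IsIndepSet A then
      X ^ #A * (1 + X) ^ #{w | ∀ a ∈ A, ¬ H.Adj (inl a) (inr w)} else 0 := by
  rw [indepPoly, ← sumEquiv.symm.toEquiv.sum_comp, Fintype.sum_prod_type]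
  refine sum_congr rfl fun A _ ↦ ?_
  simp only [RelIso.coe_fn_toEquiv, sumEquiv_symm_apply, isIndepSet_disjSum_iff_s11 hW, hG,
    card_disjSum]
  split_ifs with hA
  · have hfree (B : Finset W) : (∀ a ∈ A, ∀ b ∈ B, ¬ H.Adj (inl a) (inr b)) ↔
        B ∈ ({w | ∀ a ∈ A, ¬ H.Adj (inl a) (inr w)} : Finset W).powerset := by
      simp only [mem_powerset, subset_iff, mem_filter_univ]
      exact ⟨fun h b hb a ha ↦ h a ha b hb, fun h a ha b hb ↦ h hb a ha⟩
    simp only [hA, true_and, hfree, sum_ite_mem, univ_inter, pow_add, ← mul_sum,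
      sum_powerset_X_pow]
  · simp [hA]

end IndependentExtension

theorem comap_inl_corona {V W : Type*} (G : SimpleGraph V) (H : SimpleGraph W) :
    (corona G H).comap inl = G :=
  rfl

theorem indepPoly_corona_bot {V W : Type*} [Fintype V] [Fintype W] [DecidableEq V]
    (G : SimpleGraph V) :
    indepPoly (corona G (⊥ : SimpleGraph W)) = ∑ A : Finset V, if G.IsIndepSet A then
      X ^ #A * (1 + X) ^ ((Fintype.card V - #A) * Fintype.card W) else 0 := by
  rw [indepPoly_eq_sum_of_forall_not_adj_inr (comap_inl_corona G ⊥) fun ⟨_, _⟩ ⟨_, _⟩ h ↦ h.2]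
  refine sum_congr rfl fun A _ ↦ ?_
  congr 3
  have hfree : ({w | ∀ a ∈ A, ¬ (corona G ⊥).Adj (inl a) (inr w)} : Finset (V × W)) =
      Aᶜ ×ˢ univ := by
    ext ⟨v, w⟩
    simp [corona]
  rw [hfree, card_product, card_compl, card_univ]

section CliqueCover

variable {V : Type*} [Fintype V] [DecidableEq V] {G : SimpleGraph V}
  {Φ : Finpartition (univ : Finset V)} {A : Finset V}

theorem card_parts_meeting_eq_card (hΦ : ∀ P ∈ Φ.parts, G.IsClique (P : Set V))
    (hA : G.IsIndepSet A) : #{P : Φ.parts | ∃ a ∈ A, a ∈ (P : Finset V)} = #A := by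
  symm
  refine card_bij (fun a _ ↦ ⟨Φ.part a, Φ.part_mem.2 (mem_univ a)⟩) (fun a ha ↦ ?_)
    (fun a₁ ha₁ a₂ ha₂ h ↦ ?_) (fun P hP ↦ ?_)
  · simpa using ⟨a, ha, Φ.mem_part (mem_univ a)⟩
  · by_contra hne
    have h₂ : a₂ ∈ Φ.part a₁ :=
      (Φ.mem_part_iff_part_eq_part (mem_univ _) (mem_univ _)).2 (congrArg Subtype.val h).symm
    exact hA ha₁ ha₂ hne (hΦ _ (Φ.part_mem.2 (mem_univ a₁)) (Φ.mem_part (mem_univ a₁)) h₂ hne)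
  · obtain ⟨a, ha, haP⟩ := (mem_filter_univ _).1 hP
    exact ⟨a, ha, Subtype.ext (Φ.part_eq_of_mem P.2 haP)⟩

theorem card_le_card_parts (hΦ : ∀ P ∈ Φ.parts, G.IsClique (P : Set V))
    (hA : G.IsIndepSet A) : #A ≤ #Φ.parts := by
  rw [← card_parts_meeting_eq_card hΦ hA, ← Fintype.card_coe Φ.parts, ← card_univ]
  exact card_filter_le _ _

theorem card_parts_avoiding_eq (hΦ : ∀ P ∈ Φ.parts, G.IsClique (P : Set V))
    (hA : G.IsIndepSet A) : #{P : Φ.parts | ∀ a ∈ A, a ∉ (P : Finset V)} = #Φ.parts - #A := by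
  have := card_filter_add_card_filter_not (s := univ) fun P : Φ.parts ↦ ∃ a ∈ A, a ∈ P.1
  simp only [not_exists, not_and, card_parts_meeting_eq_card hΦ hA, card_univ,
    Fintype.card_coe] at this
  omega

theorem comap_inl_cliqueExtend : (cliqueExtend G Φ).comap inl = G :=
  rfl

theorem indepPoly_cliqueExtend (hΦ : ∀ P ∈ Φ.parts, G.IsClique (P : Set V)) :
    indepPoly (cliqueExtend G Φ) = ∑ A : Finset V, if G.IsIndepSet A then
      X ^ #A * (1 + X) ^ ((#Φ.parts - #A) * 2) else 0 := by
  rw [indepPoly_eq_sum_of_forall_not_adj_inr comap_inl_cliqueExtend fun _ _ h ↦ h]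
  refine sum_congr rfl fun A _ ↦ ?_
  split_ifs with hA
  · congr 2
    have hfree :
        ({w | ∀ a ∈ A, ¬ (cliqueExtend G Φ).Adj (inl a) (inr w)} : Finset (Φ.parts × Fin 2)) =
        ({P | ∀ a ∈ A, a ∉ (P : Finset V)} : Finset Φ.parts) ×ˢ univ := by
      ext ⟨P, i⟩
      simp only [mem_filter, mem_univ, true_and, mem_product, and_true]
      rfl
    rw [hfree, card_product, card_parts_avoiding_eq hΦ hA, card_univ, Fintype.card_fin]
  · rfl

end CliqueCover

theorem cliqueCover_factorization {V : Type*} [Fintype V] [DecidableEq V]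
    (G : SimpleGraph V) (Φ : Finpartition (Finset.univ : Finset V))
    (hΦ : ∀ P ∈ Φ.parts, G.IsClique (P : Set V)) :
    indepPoly (corona G (⊥ : SimpleGraph (Fin 2))) =
      (1 + X) ^ (2 * Fintype.card V - 2 * Φ.parts.card) * indepPoly (cliqueExtend G Φ) := by
  have hqn : #Φ.parts ≤ Fintype.card V := by simpa using Φ.card_parts_le_card
  rw [indepPoly_corona_bot, indepPoly_cliqueExtend hΦ, mul_sum]
  refine sum_congr rfl fun A _ ↦ ?_
  split_ifs with hA
  · have hAq := card_le_card_parts hΦ hA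
    rw [mul_left_comm, ← pow_add, Fintype.card_fin]
    congr 2
    omega
  · rw [mul_zero]
end

section
/- For every clique cover Φ of a graph G, the independence polynomial I(Φ(G); x) is symmetric (palindromic). -/
open Polynomial

/-! An independent set of `Φ(G)` is an independent set `S` of `G` together with an arbitrary set
of new vertices attached to cliques that `S` misses. An independent set meets each clique at most
once, so it misses exactly `k - |S|` of the `k` cliques, and
`I(Φ(G); x) = ∑_S x^|S| (1 + x)^(2(k - |S|))`.
Each summand is self-reciprocal of formal degree `2k`, as `x` is of formal degree `2` and `1 + x`
of formal degree `1`; since the constant term is `1`, the degree is exactly `2k`. -/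

namespace Polynomial

variable {R : Type*} [Semiring R]

/-- The formal degree `n` may exceed `p.natDegree`; this is what makes the class closed under
sums and products. -/
def IsSelfReciprocal (n : ℕ) (p : R[X]) : Prop :=
  p.natDegree ≤ n ∧ p.reflect n = p

namespace IsSelfReciprocal

lemma zero (n : ℕ) : IsSelfReciprocal n (0 : R[X]) :=
  ⟨natDegree_zero.trans_le n.zero_le, reflect_zero⟩

lemma one : IsSelfReciprocal 0 (1 : R[X]) :=
  ⟨natDegree_one.le, by rw [reflect_one, pow_zero]⟩

lemma add {n : ℕ} {p q : R[X]} (hp : IsSelfReciprocal n p) (hq : IsSelfReciprocal n q) :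
    IsSelfReciprocal n (p + q) :=
  ⟨natDegree_add_le_of_degree_le hp.1 hq.1, by rw [reflect_add, hp.2, hq.2]⟩

lemma sum {ι : Type*} {n : ℕ} {s : Finset ι} {f : ι → R[X]}
    (h : ∀ i ∈ s, IsSelfReciprocal n (f i)) : IsSelfReciprocal n (∑ i ∈ s, f i) :=
  Finset.sum_induction f _ (fun _ _ => add) (zero n) h

lemma mul {m n : ℕ} {p q : R[X]} (hp : IsSelfReciprocal m p) (hq : IsSelfReciprocal n q) :
    IsSelfReciprocal (m + n) (p * q) :=
  ⟨natDegree_mul_le_of_le hp.1 hq.1, by rw [reflect_mul p q hp.1 hq.1, hp.2, hq.2]⟩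

lemma pow {n : ℕ} {p : R[X]} (hp : IsSelfReciprocal n p) (k : ℕ) :
    IsSelfReciprocal (n * k) (p ^ k) := by
  induction k with
  | zero => exact one
  | succ k ih => rw [pow_succ, Nat.mul_succ]; exact ih.mul hp

end IsSelfReciprocal

lemma isSelfReciprocal_X : IsSelfReciprocal 2 (X : R[X]) :=
  ⟨natDegree_X_le.trans one_le_two, by simpa using reflect_monomial (R := R) 2 1⟩

lemma isSelfReciprocal_one_add_X : IsSelfReciprocal 1 (1 + X : R[X]) :=
  ⟨(natDegree_add_le _ _).trans (max_le (natDegree_one.trans_le zero_le_one) natDegree_X_le),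
    by rw [reflect_add, reflect_one, reflect_one_X, pow_one, add_comm]⟩

lemma isSelfReciprocal_X_pow_mul_one_add_X_pow {j k : ℕ} (h : j ≤ k) :
    IsSelfReciprocal (2 * k) (X ^ j * (1 + X) ^ (2 * (k - j)) : R[X]) := by
  have hprod := (isSelfReciprocal_X (R := R)).pow j |>.mul
    (isSelfReciprocal_one_add_X.pow (2 * (k - j)))
  convert hprod using 1
  omega

theorem IsSelfReciprocal.isPalindromic {n : ℕ} {p : ℤ[X]} (hp : IsSelfReciprocal n p)
    (h0 : p.coeff 0 ≠ 0) : IsPalindromic p := by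
  have hcoeff : ∀ j ≤ n, p.coeff j = p.coeff (n - j) := fun j hj => by
    simpa only [hp.2, revAt_le hj] using coeff_reflect n p j
  have hdeg : p.natDegree = n :=
    hp.1.antisymm (le_natDegree_of_ne_zero (by rwa [hcoeff n le_rfl, Nat.sub_self]))
  intro j hj
  rw [hdeg] at hj ⊢
  exact hcoeff j hj

open Finset in
lemma sum_X_pow_card_powerset {R ι : Type*} [CommSemiring R] (s : Finset ι) :
    ∑ t ∈ s.powerset, (X : R[X]) ^ #t = (1 + X) ^ #s := by
  simpa [add_comm] using sum_pow_mul_eq_add_pow (X : R[X]) 1 s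

end Polynomial

open Finset

namespace Finpartition

variable {V : Type*} [DecidableEq V] {G : SimpleGraph V} {S : Finset V} {Φ : Finpartition S}
  {s : Finset V}

lemma filter_not_disjoint_eq_image_part (hsS : s ⊆ S) :
    {P ∈ Φ.parts | ¬ Disjoint P s} = s.image Φ.part := by
  ext P
  simp only [mem_filter, mem_image, not_disjoint_iff]
  constructor
  · rintro ⟨hP, v, hvP, hvs⟩
    exact ⟨v, hvs, Φ.part_eq_of_mem hP hvP⟩
  · rintro ⟨v, hvs, rfl⟩
    exact ⟨Φ.part_mem.2 (hsS hvs), v, Φ.mem_part (hsS hvs), hvs⟩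

lemma card_filter_not_disjoint_of_isIndepSet (hΦ : ∀ P ∈ Φ.parts, G.IsClique (P : Set V))
    (hsS : s ⊆ S) (hs : G.IsIndepSet (s : Set V)) :
    #{P ∈ Φ.parts | ¬ Disjoint P s} = #s := by
  rw [filter_not_disjoint_eq_image_part hsS]
  refine card_image_of_injOn fun v hv w hw hvw => ?_
  by_contra hne
  have hwv : w ∈ Φ.part v := hvw ▸ Φ.mem_part (hsS hw)
  exact hs hv hw hne (hΦ _ (Φ.part_mem.2 (hsS hv)) (Φ.mem_part (hsS hv)) hwv hne)

lemma card_filter_disjoint_add_card_of_isIndepSet (hΦ : ∀ P ∈ Φ.parts, G.IsClique (P : Set V))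
    (hsS : s ⊆ S) (hs : G.IsIndepSet (s : Set V)) :
    #{P ∈ Φ.parts | Disjoint P s} + #s = #Φ.parts := by
  rw [← card_filter_not_disjoint_of_isIndepSet hΦ hsS hs, card_filter_add_card_filter_not]

end Finpartition

namespace SimpleGraph

section IndepPoly

variable {V : Type*} [Fintype V]

open scoped Classical in
lemma indepPoly_eq_sum_isIndepSet (G : SimpleGraph V) :
    indepPoly G = ∑ s ∈ univ.filter (fun s : Finset V => G.IsIndepSet (s : Set V)), X ^ #s :=
  (sum_filter _ _).symm

lemma coeff_zero_indepPoly (G : SimpleGraph V) : (indepPoly G).coeff 0 = 1 := by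
  classical
  rw [indepPoly_eq_sum_isIndepSet, finsetSum_coeff, sum_eq_single_of_mem ∅ (by simp)]
  · simp
  · intro s _ hs
    rw [coeff_X_pow, if_neg (Ne.symm (card_ne_zero.2 (nonempty_iff_ne_empty.2 hs)))]

end IndepPoly

section DisjSum

variable {α β : Type*} [Fintype β] {G : SimpleGraph α} {H : SimpleGraph (α ⊕ β)}

open scoped Classical in
noncomputable def inrNonNeighbors (H : SimpleGraph (α ⊕ β)) (s : Finset α) : Finset β :=
  {b | ∀ a ∈ s, ¬ H.Adj (.inl a) (.inr b)}

lemma mem_inrNonNeighbors {s : Finset α} {b : β} :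
    b ∈ H.inrNonNeighbors s ↔ ∀ a ∈ s, ¬ H.Adj (.inl a) (.inr b) := by
  classical
  simp [inrNonNeighbors]

lemma isIndepSet_disjSum_iff (hG : H.comap Sum.inl = G)
    (hβ : ∀ b b', ¬ H.Adj (.inr b) (.inr b')) (s : Finset α) (t : Finset β) :
    H.IsIndepSet (s.disjSum t : Set (α ⊕ β)) ↔
      G.IsIndepSet (s : Set α) ∧ t ⊆ H.inrNonNeighbors s := by
  subst hG
  constructor
  · intro h
    exact ⟨fun a ha a' ha' hne => h (by simpa) (by simpa) (by simpa),
      fun b hb => mem_inrNonNeighbors.2 fun a ha => h (by simpa) (by simpa) (by simp)⟩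
  · rintro ⟨hs, ht⟩ (a | b) hx (a' | b') hy hne <;>
      simp only [mem_coe, inl_mem_disjSum, inr_mem_disjSum] at hx hy
    · exact hs hx hy (fun h => hne (congrArg _ h))
    · simpa using mem_inrNonNeighbors.1 (ht hy) a hx
    · simpa [H.adj_comm] using mem_inrNonNeighbors.1 (ht hx) a' hy
    · exact hβ b b'

open scoped Classical in
theorem indepPoly_eq_sum_of_forall_not_adj_inr [Fintype α] [DecidableEq α]
    (hG : H.comap Sum.inl = G)
    (hβ : ∀ b b', ¬ H.Adj (.inr b) (.inr b')) :
    indepPoly H = ∑ s ∈ univ.filter (fun s : Finset α => G.IsIndepSet (s : Set α)),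
      X ^ #s * (1 + X) ^ #(H.inrNonNeighbors s) := by
  calc indepPoly H
      = ∑ u : Finset (α ⊕ β), if H.IsIndepSet (u : Set (α ⊕ β)) then X ^ #u else 0 := by
        rw [indepPoly_eq_sum_isIndepSet, sum_filter]; congr!
    _ = ∑ p : Finset α × Finset β,
          if H.IsIndepSet (p.1.disjSum p.2 : Set (α ⊕ β)) then X ^ (#p.1 + #p.2) else 0 :=
        (Fintype.sum_equiv sumEquiv.toEquiv.symm _ _ fun p => by simp [card_disjSum]).symm
    _ = ∑ s : Finset α, ∑ t : Finset β,
          if H.IsIndepSet (s.disjSum t : Set (α ⊕ β)) then X ^ (#s + #t) else 0 :=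
        Fintype.sum_prod_type _
    _ = _ := by
      rw [sum_filter]
      refine sum_congr rfl fun s _ => ?_
      simp_rw [isIndepSet_disjSum_iff hG hβ, ite_and, ← mem_powerset]
      split_ifs
      · rw [Fintype.sum_ite_mem, ← sum_X_pow_card_powerset, mul_sum]
        simp_rw [pow_add]
      · simp

end DisjSum

section CliqueExtend

variable {V : Type*} [Fintype V] [DecidableEq V] {G : SimpleGraph V}
  {Φ : Finpartition (univ : Finset V)}

lemma comap_inl_cliqueExtend : (cliqueExtend G Φ).comap Sum.inl = G := rfl

lemma cliqueExtend_not_adj_inr_inr (w w' : Φ.parts × Fin 2) :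
    ¬ (cliqueExtend G Φ).Adj (.inr w) (.inr w') :=
  id

lemma card_inrNonNeighbors_cliqueExtend (s : Finset V) :
    #((cliqueExtend G Φ).inrNonNeighbors s) = #{P ∈ Φ.parts | Disjoint P s} * 2 := by
  have hfree : (cliqueExtend G Φ).inrNonNeighbors s =
      ({P : Φ.parts | Disjoint (P : Finset V) s} : Finset Φ.parts) ×ˢ univ := by
    ext ⟨P, i⟩
    simp only [mem_inrNonNeighbors, mem_filter, mem_product, mem_univ, true_and, and_true,
      disjoint_right]
    rfl
  have hsub : #{P : Φ.parts | Disjoint (P : Finset V) s} = #{P ∈ Φ.parts | Disjoint P s} := by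
    rw [univ_eq_attach, filter_attach (fun P => Disjoint P s), card_map, card_attach]
  rw [hfree, card_product, hsub, card_univ, Fintype.card_fin]

open scoped Classical in
theorem indepPoly_cliqueExtend (hΦ : ∀ P ∈ Φ.parts, G.IsClique (P : Set V)) :
    indepPoly (cliqueExtend G Φ) =
      ∑ s ∈ univ.filter (fun s : Finset V => G.IsIndepSet (s : Set V)),
        X ^ #s * (1 + X) ^ (2 * (#Φ.parts - #s)) := by
  rw [indepPoly_eq_sum_of_forall_not_adj_inr comap_inl_cliqueExtend cliqueExtend_not_adj_inr_inr]
  refine sum_congr rfl fun s hs => ?_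
  have hmissed :=
    Φ.card_filter_disjoint_add_card_of_isIndepSet hΦ (subset_univ s) (mem_filter.1 hs).2
  rw [card_inrNonNeighbors_cliqueExtend]
  congr 2
  omega

end CliqueExtend

end SimpleGraph

theorem cliqueExtend_symmetric {V : Type*} [Fintype V] [DecidableEq V]
    (G : SimpleGraph V) (Φ : Finpartition (Finset.univ : Finset V))
    (hΦ : ∀ P ∈ Φ.parts, G.IsClique (P : Set V)) :
    IsPalindromic (indepPoly (cliqueExtend G Φ)) := by
  classical
  refine IsSelfReciprocal.isPalindromic (n := 2 * #Φ.parts) ?_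
    (by rw [SimpleGraph.coeff_zero_indepPoly]; exact one_ne_zero)
  rw [SimpleGraph.indepPoly_cliqueExtend hΦ]
  refine IsSelfReciprocal.sum fun s hs => isSelfReciprocal_X_pow_mul_one_add_X_pow ?_
  have hmissed :=
    Φ.card_filter_disjoint_add_card_of_isIndepSet hΦ (subset_univ s) (mem_filter.1 hs).2
  omega
end

section
/- Let G be a graph on n vertices and Γ a cycle cover of G (a spanning subgraph whose components are single vertices, single edges, or cycles) containing exactly k vertex-cycles. Then I(G ∘ 2K₁; x) = (1+x)^{n−k} · I(Γ(G); x), where Γ(G) is the graph produced by Stevanović's Rule 2. -/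
open Polynomial

/-- A cycle cover of `G`: a spanning subgraph whose components (indexed by `ι`) are
vertices (size 1), edges (size 2), or cycles (size ≥ 3). -/
structure CycleCover (ι : Type*) [Fintype ι] {V : Type*} (G : SimpleGraph V) where
  size : ι → ℕ
  pos : ∀ i, 0 < size i
  c : ∀ i, ZMod (size i) → V
  bij : Function.Bijective (fun p : Σ i, ZMod (size i) => c p.1 p.2)
  adj_edge : ∀ i, size i = 2 → G.Adj (c i 0) (c i 1)
  adj_cycle : ∀ i, 3 ≤ size i → ∀ j, G.Adj (c i j) (c i (j + 1))

/-- The graph `Γ(G)` obtained from a cycle cover by Stevanović's Rule 2. -/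
def gammaGraph {ι V : Type*} [Fintype ι] (G : SimpleGraph V) (cc : CycleCover ι G) :
    SimpleGraph (V ⊕ Σ i, Fin (max (cc.size i) 2)) where
  Adj x y :=
    match x, y with
    | .inl u, .inl v => G.Adj u v
    | .inl u, .inr ⟨i, j⟩ =>
        u = cc.c i ((j : ℕ) : ZMod (cc.size i)) ∨
          u = cc.c i (((j : ℕ) : ZMod (cc.size i)) + 1)
    | .inr ⟨i, j⟩, .inl u =>
        u = cc.c i ((j : ℕ) : ZMod (cc.size i)) ∨
          u = cc.c i (((j : ℕ) : ZMod (cc.size i)) + 1)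
    | .inr _, .inr _ => False
  symm := by
    constructor
    rintro (u | ⟨i, j⟩) (v | ⟨i', j'⟩) h
    · exact G.adj_symm h
    · exact h
    · exact h
    · exact h.elim
  loopless := by
    constructor
    rintro (u | ⟨i, j⟩) h
    · exact G.irrefl h
    · exact h

/-!
Both graphs are `G` with an independent set of new vertices attached to `V`, so an independent
set is the choice of an independent `a ⊆ V` together with any set of new vertices having no
neighbour in `a`; thus `I = ∑ₐ X^|a| (1 + X)^N(a)`, with `N(a)` the number of such new vertices.
For the corona `N(a) = 2 (n - |a|)`. In `Γ(G)`, along a component of size `s` the new vertices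
missed by `a` number `s - 2 |a ∩ C|` (no two consecutive vertices of `C` lie in `a`), except
that a vertex component contributes `2 - 2 |a ∩ C|`; summing, `N(a) + 2 |a| = n + k`.
-/

open Finset

section RightIndependent

variable {α β : Type*} [Fintype α] [Fintype β]

lemma sum_ite_subset_pow_card [DecidableEq β] {R : Type*} [CommSemiring R] (x : R)
    (T : Finset β) :
    ∑ b : Finset β, (if b ⊆ T then x ^ #b else 0) = (1 + x) ^ #T := by
  rw [← sum_filter, show ({b | b ⊆ T} : Finset (Finset β)) = T.powerset by ext; simp,
    add_comm, ← sum_pow_mul_eq_add_pow]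
  simp

open scoped Classical in
noncomputable def rightNonNeighbors (H : SimpleGraph (α ⊕ β)) (a : Finset α) : Finset β :=
  {w | ∀ v ∈ a, ¬H.Adj (.inl v) (.inr w)}

lemma mem_rightNonNeighbors {H : SimpleGraph (α ⊕ β)} {a : Finset α} {w : β} :
    w ∈ rightNonNeighbors H a ↔ ∀ v ∈ a, ¬H.Adj (.inl v) (.inr w) := by
  simp [rightNonNeighbors]

variable {G : SimpleGraph α} {H : SimpleGraph (α ⊕ β)}

lemma isIndepSet_disjSum_iff_s15 (hG : H.comap Sum.inl = G) (hβ : ∀ w w', ¬H.Adj (.inr w) (.inr w'))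
    (a : Finset α) (b : Finset β) :
    H.IsIndepSet ↑(a.disjSum b) ↔ G.IsIndepSet ↑a ∧ b ⊆ rightNonNeighbors H a := by
  subst hG
  constructor
  · intro h
    refine ⟨fun u hu v hv huv => h (by simpa) (by simpa) (by simpa), fun w hw => ?_⟩
    exact mem_rightNonNeighbors.2 fun v hv => h (by simpa) (by simpa) (by simp)
  · rintro ⟨ha, hb⟩ (u | w) hx (v | w') hy hxy
    · exact ha (by simpa using hx) (by simpa using hy) (by simpa using hxy)
    · exact mem_rightNonNeighbors.1 (hb (by simpa using hy)) u (by simpa using hx)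
    · exact fun h => mem_rightNonNeighbors.1 (hb (by simpa using hx)) v (by simpa using hy) h.symm
    · exact hβ w w'

open scoped Classical in
lemma indepPoly_eq_sum_rightNonNeighbors (hG : H.comap Sum.inl = G)
    (hβ : ∀ w w', ¬H.Adj (.inr w) (.inr w')) :
    indepPoly H = ∑ a : Finset α, if G.IsIndepSet ↑a then
      X ^ #a * (1 + X) ^ #(rightNonNeighbors H a) else 0 := by
  simp only [indepPoly, ← SimpleGraph.isIndepSet_iff]
  rw [← (sumEquiv (α := α) (β := β)).symm.toEquiv.sum_comp, Fintype.sum_prod_type]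
  refine sum_congr rfl fun a _ => ?_
  simp only [OrderIso.coe_toEquiv, sumEquiv_symm_apply, isIndepSet_disjSum_iff_s15 hG hβ,
    card_disjSum, pow_add]
  split_ifs with ha
  · simp only [ha, true_and, ← sum_ite_subset_pow_card, mul_sum, mul_ite, mul_zero]
  · simp [ha]

lemma indepPoly_eq_pow_mul_indepPoly {γ : Type*} [Fintype γ] {H' : SimpleGraph (α ⊕ γ)}
    (hG : H.comap Sum.inl = G) (hG' : H'.comap Sum.inl = G)
    (hβ : ∀ w w', ¬H.Adj (.inr w) (.inr w')) (hγ : ∀ w w', ¬H'.Adj (.inr w) (.inr w'))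
    (m : ℕ) (hm : ∀ a : Finset α, G.IsIndepSet ↑a →
      #(rightNonNeighbors H a) = m + #(rightNonNeighbors H' a)) :
    indepPoly H = (1 + X) ^ m * indepPoly H' := by
  rw [indepPoly_eq_sum_rightNonNeighbors hG hβ, indepPoly_eq_sum_rightNonNeighbors hG' hγ,
    mul_sum]
  refine sum_congr rfl fun a _ => ?_
  split_ifs with ha
  · rw [hm a ha, pow_add]; ring
  · rw [mul_zero]

end RightIndependent

lemma card_rightNonNeighbors_corona {V W : Type*} [Fintype V] [Fintype W] (G : SimpleGraph V)
    (H : SimpleGraph W) (a : Finset V) :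
    #(rightNonNeighbors (corona G H) a) = (Fintype.card V - #a) * Fintype.card W := by
  classical
  have : rightNonNeighbors (corona G H) a = aᶜ ×ˢ univ := by
    ext ⟨u, w⟩
    simp [mem_rightNonNeighbors, corona]
  rw [this, card_product, card_compl, card_univ]

lemma ZMod.card_filter_not_and_not_add_one (s : ℕ) [NeZero s] (P : ZMod s → Prop)
    [DecidablePred P] (h : ∀ j, ¬(P j ∧ P (j + 1))) :
    #{j | ¬P j ∧ ¬P (j + 1)} + 2 * #{j | P j} = s := by
  have hshift : #{j | P (j + 1)} = #{j | P j} :=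
    card_equiv (Equiv.addRight 1) (by simp)
  have hsplit : #{j | ¬P j ∧ ¬P (j + 1)} + #{j | P j} + #{j | P (j + 1)} =
      #(univ : Finset (ZMod s)) := by
    rw [card_filter, card_filter, card_filter, card_eq_sum_ones,
      ← sum_add_distrib, ← sum_add_distrib]
    -- by `h`, each `j` satisfies exactly one of the three conditions
    refine sum_congr rfl fun j _ => ?_
    have := h j
    split_ifs <;> tauto
  rw [card_univ, ZMod.card] at hsplit
  omega

lemma card_filter_fin_max_two_add_two_mul (s : ℕ) [NeZero s] (P : ZMod s → Prop)
    [DecidablePred P] (hP : 2 ≤ s → ∀ j, ¬(P j ∧ P (j + 1))) :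
    #{j : Fin (max s 2) | ¬P (j : ℕ) ∧ ¬P ((j : ℕ) + 1)} + 2 * #{j | P j} =
      s + if s = 1 then 1 else 0 := by
  rcases (Nat.one_le_iff_ne_zero.2 (NeZero.ne s)).eq_or_lt' with rfl | hs
  · have hconst : ∀ j : ZMod 1, j = 0 := fun j => Subsingleton.elim j 0
    by_cases h0 : P 0 <;> simp [hconst, h0]
  · have hcycle := ZMod.card_filter_not_and_not_add_one s P (hP hs)
    have hcast : #{j : Fin (max s 2) | ¬P (j : ℕ) ∧ ¬P ((j : ℕ) + 1)} =
        #{j : ZMod s | ¬P j ∧ ¬P (j + 1)} := by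
      refine card_bijective (fun j : Fin (max s 2) => ((j : ℕ) : ZMod s)) ?_ (by simp)
      have hmax : max s 2 = s := max_eq_left hs
      refine (Fintype.bijective_iff_injective_and_card _).2
        ⟨fun i j hij => Fin.ext ?_, by simp [hmax]⟩
      have hi : (i : ℕ) < s := i.isLt.trans_eq hmax
      have hj : (j : ℕ) < s := j.isLt.trans_eq hmax
      simpa [ZMod.val_cast_of_lt hi, ZMod.val_cast_of_lt hj] using congrArg ZMod.val hij
    rw [if_neg hs.ne', hcast]
    omega

lemma card_filter_sigma {ι : Type*} {κ : ι → Type*} [Fintype ι] [∀ i, Fintype (κ i)]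
    (P : (Σ i, κ i) → Prop) [DecidablePred P] :
    #{p | P p} = ∑ i, #{j | P ⟨i, j⟩} := by
  rw [← univ_sigma_univ, filter_sigma, card_sigma]

namespace CycleCover

variable {ι V : Type*} [Fintype ι] {G : SimpleGraph V}

lemma card_index_le_card [Fintype V] (cc : CycleCover ι G) : Fintype.card ι ≤ Fintype.card V :=
  Fintype.card_le_of_injective (fun i => cc.c i 0) fun i j h =>
    congrArg Sigma.fst (cc.bij.1 (a₁ := ⟨i, 0⟩) (a₂ := ⟨j, 0⟩) h)

variable (cc : CycleCover ι G)

instance neZero_size (i : ι) : NeZero (cc.size i) := ⟨(cc.pos i).ne'⟩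

lemma adj_add_one {i : ι} (hi : 2 ≤ cc.size i) (j : ZMod (cc.size i)) :
    G.Adj (cc.c i j) (cc.c i (j + 1)) := by
  rcases hi.eq_or_lt' with h | h
  · have key : ∀ (s : ℕ) (c : ZMod s → V), s = 2 → G.Adj (c 0) (c 1) →
        ∀ j, G.Adj (c j) (c (j + 1)) := by
      rintro s c rfl h01 j
      fin_cases j
      · exact h01
      · exact h01.symm -- `1 + 1 = 0` in `ZMod 2`
    exact key _ _ h (cc.adj_edge i h) j
  · exact cc.adj_cycle i h j

lemma card_eq_sum_card [DecidableEq V] (a : Finset V) :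
    #a = ∑ i, #{j | cc.c i j ∈ a} :=
  calc #a = #{p : Σ i, ZMod (cc.size i) | cc.c p.1 p.2 ∈ a} :=
        (card_bijective _ cc.bij (by simp)).symm
    _ = _ := card_filter_sigma _

variable [Fintype V]

lemma card_eq_sum_size : Fintype.card V = ∑ i, cc.size i := by
  rw [← Fintype.card_congr (Equiv.ofBijective _ cc.bij), Fintype.card_sigma]
  simp [ZMod.card]

lemma card_rightNonNeighbors_gammaGraph_add {a : Finset V} (ha : G.IsIndepSet ↑a) :
    #(rightNonNeighbors (gammaGraph G cc) a) + 2 * #a =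
      Fintype.card V + #{i | cc.size i = 1} := by
  classical
  have hfree : rightNonNeighbors (gammaGraph G cc) a =
      ({w | cc.c w.1 ((w.2 : ℕ) : ZMod _) ∉ a ∧ cc.c w.1 ((w.2 : ℕ) + 1) ∉ a} :
        Finset (Σ i, Fin (max (cc.size i) 2))) := by
    ext ⟨i, j⟩
    simp only [mem_rightNonNeighbors, gammaGraph, mem_filter, mem_univ, true_and]
    grind
  have hcomp (i : ι) := card_filter_fin_max_two_add_two_mul (cc.size i) (fun j => cc.c i j ∈ a)
    fun hi j hj => ha hj.1 hj.2 (cc.adj_add_one hi j).ne (cc.adj_add_one hi j)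
  rw [hfree, card_filter_sigma, cc.card_eq_sum_card a, cc.card_eq_sum_size, card_filter, mul_sum,
    ← sum_add_distrib, ← sum_add_distrib]
  exact sum_congr rfl fun i _ => hcomp i

end CycleCover

theorem cycleCover_factorization {ι V : Type*} [Fintype ι] [Fintype V]
    (G : SimpleGraph V) (cc : CycleCover ι G) :
    indepPoly (corona G (⊥ : SimpleGraph (Fin 2))) =
      (1 + X) ^ (Fintype.card V - (Finset.univ.filter fun i => cc.size i = 1).card) *
        indepPoly (gammaGraph G cc) := by
  refine indepPoly_eq_pow_mul_indepPoly (G := G) rfl rfl ?_ ?_ _ fun a ha => ?_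
  · exact fun _ _ h => h.2
  · exact fun _ _ h => h
  have hcorona := card_rightNonNeighbors_corona G (⊥ : SimpleGraph (Fin 2)) a
  have hgamma := cc.card_rightNonNeighbors_gammaGraph_add ha
  have hk : #{i | cc.size i = 1} ≤ Fintype.card V :=
    (card_filter_le _ _).trans cc.card_index_le_card
  have ha_le : #a ≤ Fintype.card V := card_le_univ a
  rw [hcorona, Fintype.card_fin]
  omega
end

section
/- For every graph G and every non-negative integer k ≤ μ(G), there exists a graph H such that G is a subgraph of H, I(H; x) is symmetric, and I(G ∘ 2K₁; x) = (1+x)^k · I(H; x). -/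
open Polynomial

/-!
Let `π : V → Q` have cliques of `G` as fibres and let `H` be `G` with a pendant vertex at every
vertex and, for every `q : Q`, a new vertex adjacent to the clique `π⁻¹ q`. Grouping the
independent sets of `H` by their trace `A` on `V`, and using that an independent `A` meets every
clique at most once, `I(H) = ∑_A x^|A| (1 + x)^(|V| + |Q| - 2|A|)`: a sum of polynomials that are
all palindromic of degree `|V| + |Q|`. In the same way `I(G ∘ 2K₁) = ∑_A x^|A| (1 + x)^(2|V| - 2|A|)
= (1 + x)^(|V| - |Q|) I(H)`. Merging the two ends of every edge of a matching of size `k` gives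
such a `π` with `|Q| = |V| - k`.
-/

open Finset

theorem coeff_X_pow_mul_one_add_X_pow_symm {R : Type*} [Semiring R] {a c j : ℕ}
    (hj : j ≤ 2 * a + c) :
    (X ^ a * (1 + X) ^ c : R[X]).coeff j = (X ^ a * (1 + X) ^ c : R[X]).coeff (2 * a + c - j) := by
  simp only [coeff_X_pow_mul', coeff_one_add_X_pow]
  split_ifs with h₁ h₂ h₂
  · rw [show 2 * a + c - j - a = c - (j - a) by omega, Nat.choose_symm (by omega)]
  · rw [Nat.choose_eq_zero_of_lt (by omega), Nat.cast_zero]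
  · rw [Nat.choose_eq_zero_of_lt (by omega), Nat.cast_zero]
  · rfl

theorem isPalindromic_sum_X_pow_mul_one_add_X_pow {ι : Type*} {s : Finset ι} {a c : ι → ℕ}
    {d : ℕ} (hd : ∀ i ∈ s, 2 * a i + c i = d) {i₀ : ι} (hi₀ : i₀ ∈ s) (ha₀ : a i₀ = 0) :
    IsPalindromic (∑ i ∈ s, X ^ a i * (1 + X) ^ c i) := by
  set p : ℤ[X] := ∑ i ∈ s, X ^ a i * (1 + X) ^ c i
  have hsymm : ∀ j ≤ d, p.coeff j = p.coeff (d - j) := fun j hj => by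
    simp only [p, finsetSum_coeff]
    refine sum_congr rfl fun i hi => ?_
    rw [← hd i hi] at hj ⊢
    exact coeff_X_pow_mul_one_add_X_pow_symm hj
  have hdeg : p.natDegree ≤ d := natDegree_sum_le_of_forall_le _ _ fun i hi =>
    (show (X ^ a i * (1 + X) ^ c i : ℤ[X]).natDegree ≤ a i + c i by compute_degree).trans
      (by have := hd i hi; omega)
  have hcoeff_zero : 0 < p.coeff 0 := by
    simp only [p, finsetSum_coeff, coeff_X_pow_mul', coeff_one_add_X_pow]
    refine lt_of_lt_of_le ?_ (single_le_sum (fun i _ => ?_) hi₀)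
    · simp [ha₀]
    · split_ifs <;> positivity
  have hnatDegree : p.natDegree = d :=
    hdeg.antisymm (le_natDegree_of_ne_zero (by rw [hsymm d le_rfl, Nat.sub_self]; omega))
  intro j hj
  rw [hnatDegree] at hj ⊢
  exact hsymm j hj

namespace SimpleGraph

section AttachIndep

variable {V W Q : Type*}

def attachIndep (G : SimpleGraph V) (R : V → W → Prop) : SimpleGraph (V ⊕ W) where
  Adj
    | .inl u, .inl v => G.Adj u v
    | .inl u, .inr p => R u p
    | .inr p, .inl u => R u p
    | .inr _, .inr _ => False
  symm := by
    constructor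
    rintro (u | p) (v | q) h
    exacts [G.adj_symm h, h, h, h]
  loopless := by
    constructor
    rintro (u | p) h
    exacts [G.loopless.irrefl u h, h]

open Classical in
noncomputable def nonNeighbors [Fintype W] (R : V → W → Prop) (A : Finset V) : Finset W :=
  {p | ∀ a ∈ A, ¬ R a p}

theorem isIndepSet_attachIndep_disjSum [Fintype W] {G : SimpleGraph V} {R : V → W → Prop}
    {A : Finset V} {B : Finset W} :
    (G.attachIndep R).IsIndepSet ↑(A.disjSum B) ↔ G.IsIndepSet ↑A ∧ B ⊆ nonNeighbors R A := by
  simp only [nonNeighbors, subset_iff, mem_filter, mem_univ, true_and]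
  constructor
  · intro h
    refine ⟨fun u hu v hv huv => h (x := .inl u) (y := .inl v) (by simpa) (by simpa) (by simpa),
      fun p hp a ha => h (x := .inl a) (y := .inr p) (by simpa) (by simpa) (by simp)⟩
  · rintro ⟨hA, hB⟩ (u | p) hx (v | q) hy hxy <;>
      simp only [mem_coe, inl_mem_disjSum, inr_mem_disjSum] at hx hy
    · exact hA hx hy (by simpa using hxy)
    · exact hB hy u hx
    · exact hB hx v hy
    · exact id

open Classical in
theorem indepPoly_attachIndep [Fintype V] [Fintype W] (G : SimpleGraph V) (R : V → W → Prop) :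
    indepPoly (G.attachIndep R) = ∑ A ∈ univ.filter fun A : Finset V => G.IsIndepSet (A : Set V),
      X ^ #A * (1 + X) ^ #(nonNeighbors R A) := by
  unfold indepPoly
  rw [← Finset.sumEquiv.symm.toEquiv.sum_comp, Fintype.sum_prod_type, sum_filter]
  refine sum_congr rfl fun A _ => ?_
  simp only [OrderIso.coe_toEquiv, sumEquiv_symm_apply, ← isIndepSet_iff,
    isIndepSet_attachIndep_disjSum, card_disjSum]
  by_cases hA : G.IsIndepSet (A : Set V)
  · simp only [hA, true_and, if_true, ← sum_filter, filter_subset_univ, pow_add, ← mul_sum]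
    rw [add_comm, ← sum_pow_mul_eq_add_pow]
    simp
  · simp [hA]

theorem nonNeighbors_sumElim [Fintype W] [Fintype Q] (R : V → W → Prop) (S : V → Q → Prop)
    (A : Finset V) :
    nonNeighbors (fun u => Sum.elim (R u) (S u)) A =
      (nonNeighbors R A).disjSum (nonNeighbors S A) := by
  ext (p | q) <;> simp [nonNeighbors]

theorem nonNeighbors_eq_compl_image [Fintype W] [DecidableEq W] (f : V → W) (A : Finset V) :
    nonNeighbors (fun u p => f u = p) A = (A.image f)ᶜ := by
  ext; simp [nonNeighbors]

theorem nonNeighbors_eq_compl_product [Fintype V] [DecidableEq V] [Fintype W] (A : Finset V) :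
    nonNeighbors (fun u (p : V × W) => u = p.1) A = Aᶜ ×ˢ univ := by
  ext; simp [nonNeighbors]

theorem corona_bot_eq_attachIndep (G : SimpleGraph V) :
    corona G (⊥ : SimpleGraph W) = G.attachIndep fun u p => u = p.1 := by
  ext (u | ⟨u, a⟩) (v | ⟨v, b⟩) <;> simp [corona, attachIndep]

end AttachIndep

theorem Iso.indepPoly_eq {V W : Type*} [Fintype V] [Fintype W] {G : SimpleGraph V}
    {G' : SimpleGraph W} (φ : G ≃g G') : indepPoly G = indepPoly G' := by
  classical
  unfold indepPoly
  refine Fintype.sum_equiv (Equiv.finsetCongr φ.toEquiv) _ _ fun s => ?_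
  refine if_congr ?_ (by simp) rfl
  simp only [Equiv.finsetCongr_apply, coe_map, Equiv.coe_toEmbedding]
  constructor
  · rintro h _ ⟨u, hu, rfl⟩ _ ⟨v, hv, rfl⟩ huv
    exact φ.map_adj_iff.not.2 (h hu hv fun h => huv (h ▸ rfl))
  · intro h u hu v hv huv
    exact φ.map_adj_iff.not.1
      (h (Set.mem_image_of_mem φ hu) (Set.mem_image_of_mem φ hv) (φ.injective.ne huv))

section CliqueCover

universe u v

variable {V : Type u} {Q : Type v}

def IsCliqueCover (G : SimpleGraph V) (π : V → Q) : Prop :=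
  ∀ ⦃u v⦄, π u = π v → u ≠ v → G.Adj u v

/-- The graph `Φ(G)` of the clique cover `π`: a pendant vertex at every vertex of `G` and a new
vertex joined to every clique `π⁻¹ q`. -/
def cliqueCoverGraph (G : SimpleGraph V) (π : V → Q) : SimpleGraph (V ⊕ V ⊕ Q) :=
  G.attachIndep fun u => Sum.elim (u = ·) (π u = ·)

variable [Fintype V] [Fintype Q] {G : SimpleGraph V} {π : V → Q}

theorem IsCliqueCover.card_nonNeighbors_add (hπ : G.IsCliqueCover π) {A : Finset V}
    (hA : G.IsIndepSet (A : Set V)) :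
    #(nonNeighbors (fun u => Sum.elim (u = ·) (π u = ·)) A) + 2 * #A =
      Fintype.card V + Fintype.card Q := by
  classical
  have hinj : Set.InjOn π A := fun u hu v hv huv =>
    by_contra fun hne => hA hu hv hne (hπ huv hne)
  have hid : nonNeighbors (fun u v : V => u = v) A = Aᶜ := by
    simpa using nonNeighbors_eq_compl_image id A
  rw [nonNeighbors_sumElim, card_disjSum, hid, nonNeighbors_eq_compl_image π]
  have := card_compl_add_card A
  have := card_compl_add_card (A.image π)
  rw [card_image_of_injOn hinj] at this
  omega

theorem IsCliqueCover.isPalindromic_indepPoly (hπ : G.IsCliqueCover π) :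
    IsPalindromic (indepPoly (G.cliqueCoverGraph π)) := by
  classical
  rw [cliqueCoverGraph, indepPoly_attachIndep]
  refine isPalindromic_sum_X_pow_mul_one_add_X_pow (d := Fintype.card V + Fintype.card Q)
    (fun A hA => ?_) (i₀ := ∅) (by simp) card_empty
  have := hπ.card_nonNeighbors_add (mem_filter.1 hA).2
  omega

theorem IsCliqueCover.indepPoly_corona_eq (hπ : G.IsCliqueCover π) {k : ℕ}
    (hk : Fintype.card Q + k = Fintype.card V) :
    indepPoly (corona G (⊥ : SimpleGraph (Fin 2))) =
      (1 + X) ^ k * indepPoly (G.cliqueCoverGraph π) := by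
  classical
  rw [corona_bot_eq_attachIndep, cliqueCoverGraph, indepPoly_attachIndep, indepPoly_attachIndep,
    mul_sum]
  refine sum_congr rfl fun A hA => ?_
  have hcover := hπ.card_nonNeighbors_add (mem_filter.1 hA).2
  have hcompl := card_compl_add_card A
  rw [nonNeighbors_eq_compl_product, card_product, card_univ, Fintype.card_fin,
    show #Aᶜ * 2 = k + #(nonNeighbors (fun u => Sum.elim (u = ·) (π u = ·)) A) by omega, pow_add]
  ring

theorem exists_isCliqueCover_of_matching {M : Finset (V × V)} (hadj : ∀ e ∈ M, G.Adj e.1 e.2)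
    (hM : (M : Set (V × V)).Pairwise fun e f =>
      e.1 ≠ f.1 ∧ e.1 ≠ f.2 ∧ e.2 ≠ f.1 ∧ e.2 ≠ f.2) :
    ∃ (Q : Type u) (_ : Fintype Q) (π : V → Q),
      G.IsCliqueCover π ∧ Fintype.card Q + #M = Fintype.card V := by
  classical
  -- `Q` is the set of vertices that are not second ends of matching edges; `π` maps the second
  -- end of a matching edge to its first end and fixes every other vertex.
  set S := M.image Prod.snd
  have hsnd : Set.InjOn Prod.snd (M : Set (V × V)) := fun e he f hf h =>
    by_contra fun hne => (hM he hf hne).2.2.2 h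
  have hfst : ∀ e ∈ M, e.1 ∈ Sᶜ := fun e he => by
    simp only [S, mem_compl, mem_image, not_exists, not_and]
    intro f hf h
    obtain rfl | hne := eq_or_ne e f
    · exact (hadj e he).ne h.symm
    · exact (hM he hf hne).2.1 h.symm
  let π (v : V) : {v // v ∈ Sᶜ} :=
    if h : ∃ e ∈ M, e.2 = v then ⟨h.choose.1, hfst _ h.choose_spec.1⟩
    else ⟨v, by simpa [S] using h⟩
  refine ⟨{v // v ∈ Sᶜ}, inferInstance, π, fun u v huv hne => ?_, ?_⟩
  · simp only [π] at huv
    split_ifs at huv with hu hv hv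
    · have heq : hu.choose = hv.choose := by_contra fun h =>
        (hM hu.choose_spec.1 hv.choose_spec.1 h).1 (Subtype.mk.inj huv)
      exact absurd (hu.choose_spec.2.symm.trans (heq ▸ hv.choose_spec.2)) hne
    · rw [← hu.choose_spec.2, ← Subtype.mk.inj huv]
      exact (hadj _ hu.choose_spec.1).symm
    · rw [← hv.choose_spec.2, Subtype.mk.inj huv]
      exact hadj _ hv.choose_spec.1
    · exact absurd (congrArg Subtype.val huv) hne
  · rw [Fintype.card_coe, ← card_image_of_injOn hsnd, card_compl_add_card]

end CliqueCover

end SimpleGraph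

theorem exists_symmetric_factor {V : Type*} [Fintype V] (G : SimpleGraph V) (k : ℕ)
    (hk : ∃ M : Finset (V × V), M.card = k ∧ (∀ e ∈ M, G.Adj e.1 e.2) ∧
      (M : Set (V × V)).Pairwise fun e f =>
        e.1 ≠ f.1 ∧ e.1 ≠ f.2 ∧ e.2 ≠ f.1 ∧ e.2 ≠ f.2) :
    ∃ (W : Type) (hW : Fintype W) (H : SimpleGraph W) (f : V ↪ W),
      (∀ u v : V, G.Adj u v → H.Adj (f u) (f v)) ∧
      IsPalindromic (@indepPoly W hW H) ∧
      indepPoly (corona G (⊥ : SimpleGraph (Fin 2))) = (1 + X) ^ k * @indepPoly W hW H := by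
  obtain ⟨M, rfl, hadj, hM⟩ := hk
  obtain ⟨Q, _, π, hπ, hcard⟩ := SimpleGraph.exists_isCliqueCover_of_matching hadj hM
  let φ := SimpleGraph.Iso.map (Fintype.equivFin _) (G.cliqueCoverGraph π)
  refine ⟨_, inferInstance, _, Function.Embedding.inl.trans φ.toEquiv.toEmbedding,
    fun u v h => φ.map_adj_iff.2 (show (G.cliqueCoverGraph π).Adj (.inl u) (.inl v) from h),
    ?_, ?_⟩
  · rw [← φ.indepPoly_eq]
    exact hπ.isPalindromic_indepPoly
  · rw [← φ.indepPoly_eq]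
    exact hπ.indepPoly_corona_eq hcard
end
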